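/- Let U be a nonempty convex subset of a separated locally convex space X and x ∈ U. If there exists a nonzero continuous linear functional x* ∈ X* with ⟨x*, y⟩ ≤ ⟨x*, x⟩ for all y ∈ U, and moreover 0 ∈ qi(U - U), then x ∉ qri(U). -/

import Mathlib

open Set Pointwise Topology

/-- The conic hull: cone(S) = ⋃_{t ≥ 0} t • S. -/
def coneHull {E : Type*} [AddCommGroup E] [Module ℝ E] (S : Set E) : Set E :=
  {x | ∃ t : ℝ, 0 ≤ t ∧ ∃ s ∈ S, x = t • s}

/-- The quasi-relative interior. -/
def qri {E : Type*} [AddCommGroup E] [Module ℝ E] [TopologicalSpace E] (U : Set E) : Set E :=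
  {x | x ∈ U ∧ ∃ M : Submodule ℝ E, closure (coneHull (U - {x})) = (M : Set E)}

/-- The quasi interior. -/
def qi {E : Type*} [AddCommGroup E] [Module ℝ E] [TopologicalSpace E] (U : Set E) : Set E :=
  {x | x ∈ U ∧ closure (coneHull (U - {x})) = Set.univ}

/-- The algebraic interior (core). -/
def algCore {E : Type*} [AddCommGroup E] [Module ℝ E] (U : Set E) : Set E :=
  {x | x ∈ U ∧ coneHull (U - {x}) = Set.univ}

/-- The relative algebraic interior (intrinsic core). -/
def icr {E : Type*} [AddCommGroup E] [Module ℝ E] (U : Set E) : Set E :=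
  {x | x ∈ U ∧ ∃ M : Submodule ℝ E, coneHull (U - {x}) = (M : Set E)}

/-- The strong quasi-relative interior. -/
def sqri {E : Type*} [AddCommGroup E] [Module ℝ E] [TopologicalSpace E] (U : Set E) : Set E :=
  {x | x ∈ U ∧ ∃ M : Submodule ℝ E, coneHull (U - {x}) = (M : Set E) ∧ IsClosed (M : Set E)}

/-- The normal cone of U at x. -/
def normalCone {E : Type*} [AddCommGroup E] [Module ℝ E] [TopologicalSpace E]
    (U : Set E) (x : E) : Set (E →L[ℝ] ℝ) :=
  {f | ∀ y ∈ U, f (y - x) ≤ 0}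

/-! If `x ∈ qri U`, the closure `M` of `cone (U - x)` is a closed subspace. It lies in the
half-space `{f ≤ 0}`, hence in `ker f`; and it contains `U - U`, hence the closure of
`cone (U - U)`, which is all of `X` because `0 ∈ qi (U - U)`. So `f = 0`. -/

section ConeHull

variable {E : Type*} [AddCommGroup E] [Module ℝ E]

theorem subset_coneHull (S : Set E) : S ⊆ coneHull S :=
  fun s hs => ⟨1, zero_le_one, s, hs, (one_smul ℝ s).symm⟩

theorem coneHull_subset {S C : Set E} (hC : ∀ t : ℝ, 0 ≤ t → ∀ z ∈ C, t • z ∈ C)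
    (hS : S ⊆ C) : coneHull S ⊆ C := by
  rintro _ ⟨t, ht, s, hs, rfl⟩
  exact hC t ht s (hS hs)

theorem closure_coneHull_subset [TopologicalSpace E] {S C : Set E} (hCcl : IsClosed C)
    (hC : ∀ t : ℝ, 0 ≤ t → ∀ z ∈ C, t • z ∈ C) (hS : S ⊆ C) : closure (coneHull S) ⊆ C :=
  closure_minimal (coneHull_subset hC hS) hCcl

theorem closure_coneHull_subset_submodule [TopologicalSpace E] {S : Set E} {M : Submodule ℝ E}
    (hM : IsClosed (M : Set E)) (hS : S ⊆ M) : closure (coneHull S) ⊆ M :=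
  closure_coneHull_subset hM (fun t _ _ hz => M.smul_mem t hz) hS

theorem closure_coneHull_subset_nonpos [TopologicalSpace E] {S : Set E} (f : E →L[ℝ] ℝ)
    (hS : ∀ z ∈ S, f z ≤ 0) : closure (coneHull S) ⊆ {z | f z ≤ 0} :=
  closure_coneHull_subset (isClosed_le f.continuous continuous_const)
    (fun t ht _ hz => by simpa using mul_nonpos_of_nonneg_of_nonpos ht hz) hS

theorem sub_subset_of_closure_coneHull_eq [TopologicalSpace E] {U : Set E} {x : E}
    {M : Submodule ℝ E} (hM : closure (coneHull (U - {x})) = M) : U - U ⊆ M := by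
  have hUx : ∀ u ∈ U, u - x ∈ M := fun u hu =>
    (hM.subset (subset_closure (subset_coneHull _ (sub_mem_sub hu rfl))) : _)
  rintro _ ⟨u, hu, v, hv, rfl⟩
  simpa using M.sub_mem (hUx u hu) (hUx v hv)

end ConeHull

theorem Submodule.apply_eq_zero_of_forall_apply_nonpos {E : Type*} [AddCommGroup E] [Module ℝ E]
    {M : Submodule ℝ E} (f : E →ₗ[ℝ] ℝ) (hf : ∀ z ∈ M, f z ≤ 0) {z : E} (hz : z ∈ M) :
    f z = 0 :=
  le_antisymm (hf z hz) (by simpa using hf (-z) (M.neg_mem hz))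

theorem not_mem_qri_of_separation_general
    {X : Type*} [AddCommGroup X] [Module ℝ X] [TopologicalSpace X]
    (U : Set X) (x : X)
    (hsep : ∃ f : X →L[ℝ] ℝ, f ≠ 0 ∧ ∀ y ∈ U, f y ≤ f x)
    (hqi : (0 : X) ∈ qi (U - U)) :
    x ∉ qri U := by
  rintro ⟨-, M, hM⟩
  obtain ⟨f, hf0, hfx⟩ := hsep
  have hMclosed : IsClosed (M : Set X) := hM ▸ isClosed_closure
  have hMf : (M : Set X) ⊆ {z | f z ≤ 0} := hM ▸ closure_coneHull_subset_nonpos f (by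
    rintro _ ⟨y, hy, _, rfl, rfl⟩
    simpa using hfx y hy)
  have hUU : U - U ⊆ M := sub_subset_of_closure_coneHull_eq hM
  have hMtop : ∀ z : X, z ∈ M := by
    have : closure (coneHull (U - U - {0})) ⊆ M :=
      closure_coneHull_subset_submodule hMclosed (by
        rintro _ ⟨z, hz, _, rfl, rfl⟩
        simpa using hUU hz)
    exact fun z => this (hqi.2 ▸ mem_univ z)
  exact hf0 (ContinuousLinearMap.ext fun z =>
    Submodule.apply_eq_zero_of_forall_apply_nonpos (f : X →ₗ[ℝ] ℝ) (fun _ hz => hMf hz) (hMtop z))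

theorem not_mem_qri_of_separation
    {X : Type*} [AddCommGroup X] [Module ℝ X] [TopologicalSpace X]
    [IsTopologicalAddGroup X] [ContinuousSMul ℝ X] [LocallyConvexSpace ℝ X] [T2Space X]
    (U : Set X) (hne : U.Nonempty) (hconv : Convex ℝ U) (x : X) (hx : x ∈ U)
    (hsep : ∃ f : X →L[ℝ] ℝ, f ≠ 0 ∧ ∀ y ∈ U, f y ≤ f x)
    (hqi : (0 : X) ∈ qi (U - U)) :
    x ∉ qri U :=
  not_mem_qri_of_separation_general U x hsep hqi
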